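/- arXiv:1109.3218 — 2 statements merged into one kernel-verified Lean document; each statement's English description precedes it below -/
import Mathlib

section
/- The Catalan numbers are odd exactly when n = 2^k - 1 for some k ≥ 0; that is, C_n is odd if and only if n+1 is a power of 2. -/
/-!
Modulo 2 the Catalan recurrence `C (n + 1) = ∑ C i * C (n - i)` reads off the coefficient of `X ^ n`
in the square of a polynomial, and over `𝔽₂` squaring is `expand 2`. Hence `C (n + 1) ≡ C (n / 2)`
for even `n` and `C (n + 1) ≡ 0` for odd `n`, and strong induction finishes, because `n + 2` is a
power of 2 exactly when `n` is even and `n / 2 + 1` is a power of 2.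
-/

/-- The n-th Catalan number. -/
def catalanNum (n : ℕ) : ℕ := (2 * n).choose n / (n + 1)

open Finset Polynomial

theorem Finset.Nat.sum_antidiagonal_mul_zmod_two (f : ℕ → ZMod 2) (n : ℕ) :
    ∑ ij ∈ antidiagonal n, f ij.1 * f ij.2 = if 2 ∣ n then f (n / 2) else 0 := by
  set q : (ZMod 2)[X] := ∑ i ∈ range (n + 1), monomial i (f i)
  have hq : ∀ i ≤ n, q.coeff i = f i := fun i hi => by
    simp [q, coeff_monomial, Nat.lt_succ_of_le hi]
  have hsq := congrArg (coeff · n) (ZMod.expand_card q)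
  simp only [coeff_expand two_pos, sq, coeff_mul] at hsq
  rw [hq _ (Nat.div_le_self n 2)] at hsq
  rw [hsq]
  refine sum_congr rfl fun ij hij => ?_
  rw [hq ij.1 (HasAntidiagonal.antidiagonal.fst_le hij),
    hq ij.2 (HasAntidiagonal.antidiagonal.snd_le hij)]

theorem catalan_succ_cast_zmod_two (n : ℕ) :
    (catalan (n + 1) : ZMod 2) = if 2 ∣ n then (catalan (n / 2) : ZMod 2) else 0 := by
  rw [catalan_succ', ← Finset.Nat.sum_antidiagonal_mul_zmod_two fun i => (catalan i : ZMod 2)]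
  push_cast
  rfl

theorem odd_catalan_succ_iff (n : ℕ) :
    Odd (catalan (n + 1)) ↔ 2 ∣ n ∧ Odd (catalan (n / 2)) := by
  rw [← ZMod.natCast_eq_one_iff_odd, ← ZMod.natCast_eq_one_iff_odd, catalan_succ_cast_zmod_two]
  split_ifs with h <;> simp [h]

theorem Nat.exists_add_two_eq_two_pow_iff (n : ℕ) :
    (∃ k, n + 2 = 2 ^ k) ↔ 2 ∣ n ∧ ∃ k, n / 2 + 1 = 2 ^ k := by
  constructor
  · rintro ⟨_ | k, hk⟩
    · omega
    · rw [pow_succ'] at hk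
      exact ⟨by omega, k, by omega⟩
  · rintro ⟨⟨m, rfl⟩, k, hk⟩
    exact ⟨k + 1, by rw [pow_succ']; omega⟩

theorem odd_catalan_iff : ∀ n : ℕ, Odd (catalan n) ↔ ∃ k, n + 1 = 2 ^ k
  | 0 => ⟨fun _ => ⟨0, rfl⟩, fun _ => by simp⟩
  | n + 1 => by
    rw [odd_catalan_succ_iff, odd_catalan_iff (n / 2), Nat.exists_add_two_eq_two_pow_iff]

theorem catalanNum_eq_catalan (n : ℕ) : catalanNum n = catalan n := by
  rw [catalan_eq_centralBinom_div, Nat.centralBinom, catalanNum]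

/-- `C n` is odd iff `n + 1` is a power of 2. -/
theorem catalan_odd_iff (n : ℕ) :
    Odd (catalanNum n) ↔ ∃ k : ℕ, n + 1 = 2 ^ k := by
  rw [catalanNum_eq_catalan, odd_catalan_iff]
end

section
/- For n ≥ 2, any two triangulations of a convex polygon with n+2 vertices can be transformed into each other by a sequence of at most 2n-2 diagonal flips. -/
/-- `e` is a diagonal of the convex polygon with `n+2` vertices `0,...,n+1`
(ordered pair with `e.1 < e.2`, endpoints not adjacent on the polygon). -/
def IsDiag (n : ℕ) (e : Fin (n + 2) × Fin (n + 2)) : Prop :=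
  e.1 < e.2 ∧ ¬(((e.2 : ℕ) = (e.1 : ℕ) + 1) ∨ ((e.1 : ℕ) = 0 ∧ (e.2 : ℕ) = n + 1))

/-- Two chords of the convex polygon cross (interiors intersect). -/
def Cross (n : ℕ) (e f : Fin (n + 2) × Fin (n + 2)) : Prop :=
  (e.1 < f.1 ∧ f.1 < e.2 ∧ e.2 < f.2) ∨ (f.1 < e.1 ∧ e.1 < f.2 ∧ f.2 < e.2)

/-- A triangulation of the convex polygon with `n+2` vertices: a maximal set of
pairwise non-crossing diagonals. -/
def IsTriangulation (n : ℕ) (T : Finset (Fin (n + 2) × Fin (n + 2))) : Prop :=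
  (∀ e ∈ T, IsDiag n e) ∧
  (∀ e ∈ T, ∀ f ∈ T, e ≠ f → ¬ Cross n e f) ∧
  (∀ e, IsDiag n e → e ∉ T → ∃ f ∈ T, Cross n e f)

/-- `a` and `b` are joined by a side (edge) of the polygon. -/
def IsSide (n : ℕ) (a b : Fin (n + 2)) : Prop :=
  a < b ∧ (((b : ℕ) = (a : ℕ) + 1) ∨ ((a : ℕ) = 0 ∧ (b : ℕ) = n + 1))

/-- A triangle of the triangulation `T`: a 3-element vertex set whose pairs are
all joined by polygon sides or diagonals of `T`. -/
def IsTriangle (n : ℕ) (T : Finset (Fin (n + 2) × Fin (n + 2)))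
    (s : Finset (Fin (n + 2))) : Prop :=
  s.card = 3 ∧ ∀ a ∈ s, ∀ b ∈ s, a < b → (IsSide n a b ∨ (a, b) ∈ T)

/-- A diagonal flip: remove one diagonal of a triangulation and replace it by
another diagonal so that the result is again a triangulation. -/
def Flip (n : ℕ) (T T' : Finset (Fin (n + 2) × Fin (n + 2))) : Prop :=
  IsTriangulation n T ∧ IsTriangulation n T' ∧
    ∃ d ∈ T, ∃ d', d' ∉ T ∧ T' = insert d' (T.erase d)

/-!
Every triangulation is joined to the fan of all diagonals at vertex `0` by at most `n - 1`
flips, each adding a missing spoke. If `(0, z)` is missing, the neighbours `x < z < y` of `0`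
closest to `z` span a diagonal `(x, y)` of the triangulation; the triangle on its far side has an
apex `x < c < y`, and flipping `(x, y)` inside the quadrilateral `0 x c y` adds the spoke
`(0, c)`. Going from the first triangulation to the fan and back to the second takes at most
`2n - 2` flips.
-/

section

variable {n : ℕ} {T : Finset (Fin (n + 2) × Fin (n + 2))} {a b c d : Fin (n + 2)}
  {e f g : Fin (n + 2) × Fin (n + 2)}

def IsEdge (n : ℕ) (T : Finset (Fin (n + 2) × Fin (n + 2))) (a b : Fin (n + 2)) : Prop :=
  IsSide n a b ∨ (a, b) ∈ T

open Classical in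
noncomputable def fan (n : ℕ) : Finset (Fin (n + 2) × Fin (n + 2)) :=
  Finset.univ.filter fun e => IsDiag n e ∧ e.1 = 0

lemma mem_fan : e ∈ fan n ↔ IsDiag n e ∧ e.1 = 0 := by
  simp [fan]

lemma Cross.symm (h : Cross n e f) : Cross n f e :=
  Or.symm h

lemma not_cross_self : ¬ Cross n e e := by
  rintro (⟨h₁, h₂, h₃⟩ | ⟨h₁, h₂, h₃⟩) <;> exact lt_asymm h₁ h₁

lemma IsSide.not_cross (h : IsSide n a b) : ¬ Cross n f (a, b) := by
  have := f.2.isLt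
  simp only [IsSide, Cross, Fin.lt_def] at *
  omega

lemma IsDiag.of_lt_of_lt_of_lt (hab : a < b) (hbc : b < c) (hcd : c < d) : IsDiag n (a, c) := by
  have := d.isLt
  simp only [IsDiag, Fin.lt_def] at *
  omega

lemma cross_side_of_cross_diagonal (hab : a < b) (hbc : b < c) (hcd : c < d)
    (h : Cross n g (a, c) ∨ Cross n g (b, d)) :
    g = (a, c) ∨ g = (b, d) ∨ Cross n g (a, b) ∨ Cross n g (b, c) ∨ Cross n g (c, d) ∨
      Cross n g (a, d) := by
  obtain ⟨p, q⟩ := g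
  simp only [Cross, Prod.mk.injEq, Fin.lt_def, Fin.ext_iff] at *
  omega

lemma IsEdge.insert_erase (h : IsEdge n T a b) (hne : (a, b) ≠ e) :
    IsEdge n (insert f (T.erase e)) a b :=
  h.imp_right fun h => Finset.mem_insert_of_mem (Finset.mem_erase.2 ⟨hne, h⟩)

lemma IsEdge.exists_mem_cross (h : IsEdge n T a b) (hg : Cross n g (a, b)) :
    ∃ f ∈ T, Cross n g f :=
  h.elim (fun h => (h.not_cross hg).elim) fun h => ⟨_, h, hg⟩

namespace IsTriangulation

variable (hT : IsTriangulation n T)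
include hT

lemma not_cross (he : e ∈ T) (hf : f ∈ T) : ¬ Cross n e f := by
  by_cases hef : e = f
  · exact hef ▸ not_cross_self
  · exact hT.2.1 e he f hf hef

lemma lt_of_isEdge (h : IsEdge n T a b) : a < b :=
  h.elim And.left fun h => (hT.1 _ h).1

lemma not_cross_of_isEdge (h : IsEdge n T a b) (hf : f ∈ T) : ¬ Cross n f (a, b) :=
  h.elim IsSide.not_cross (hT.not_cross hf)

theorem insert_erase_of_quadrilateral (hab : a < b) (hbc : b < c) (hcd : c < d)
    (hbd : (b, d) ∈ T) (h_ab : IsEdge n T a b) (h_bc : IsEdge n T b c)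
    (h_cd : IsEdge n T c d) (h_ad : IsEdge n T a d) :
    IsTriangulation n (insert (a, c) (T.erase (b, d))) := by
  have hsides : ∀ {g}, g ∈ T → g ≠ (b, d) → ¬ Cross n g (a, c) := by
    intro g hg hne hcross
    rcases cross_side_of_cross_diagonal hab hbc hcd (.inl hcross) with
      rfl | rfl | h | h | h | h
    · exact not_cross_self hcross
    · exact hne rfl
    all_goals exact hT.not_cross_of_isEdge ‹_› hg h
  refine ⟨?_, ?_, ?_⟩
  · simp only [Finset.mem_insert, Finset.mem_erase]
    rintro e (rfl | ⟨-, he⟩)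
    exacts [IsDiag.of_lt_of_lt_of_lt hab hbc hcd, hT.1 e he]
  · simp only [Finset.mem_insert, Finset.mem_erase]
    rintro e (rfl | ⟨he, heT⟩) f (rfl | ⟨hf, hfT⟩) hef hcross
    · exact hef rfl
    · exact hsides hfT hf hcross.symm
    · exact hsides heT he hcross
    · exact hT.not_cross heT hfT hcross
  · intro g hg hgT
    simp only [Finset.mem_insert, Finset.mem_erase, not_or, not_and_or, not_not] at hgT
    obtain ⟨hgac, hgbd | hgT⟩ := hgT
    · subst hgbd
      exact ⟨(a, c), Finset.mem_insert_self _ _, Or.inr ⟨hab, hbc, hcd⟩⟩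
    obtain ⟨f, hf, hcross⟩ := hT.2.2 g hg hgT
    by_cases hfbd : f = (b, d)
    · subst hfbd
      rcases cross_side_of_cross_diagonal hab hbc hcd (.inr hcross) with
        h | h | h | h | h | h
      · exact (hgac h).elim
      · exact (hgT (h ▸ hbd)).elim
      · exact (h_ab.insert_erase (by simp [Prod.ext_iff, hab.ne])).exists_mem_cross h
      · exact (h_bc.insert_erase (by simp [Prod.ext_iff, hcd.ne])).exists_mem_cross h
      · exact (h_cd.insert_erase (by simp [Prod.ext_iff, hbc.ne'])).exists_mem_cross h
      · exact (h_ad.insert_erase (by simp [Prod.ext_iff, hab.ne])).exists_mem_cross h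
    · exact ⟨f, Finset.mem_insert_of_mem (Finset.mem_erase.2 ⟨hfbd, hf⟩), hcross⟩

theorem flip_of_quadrilateral (hab : a < b) (hbc : b < c) (hcd : c < d)
    (hbd : (b, d) ∈ T) (h_ab : IsEdge n T a b) (h_bc : IsEdge n T b c)
    (h_cd : IsEdge n T c d) (h_ad : IsEdge n T a d) :
    Flip n T (insert (a, c) (T.erase (b, d))) :=
  ⟨hT, hT.insert_erase_of_quadrilateral hab hbc hcd hbd h_ab h_bc h_cd h_ad, (b, d), hbd,
    (a, c), fun hac => hT.not_cross hac hbd (Or.inl ⟨hab, hbc, hcd⟩), rfl⟩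

theorem exists_apex (hab : (a, b) ∈ T) :
    ∃ c, a < c ∧ c < b ∧ IsEdge n T a c ∧ IsEdge n T c b := by
  classical
  have hdiag : IsDiag n (a, b) := hT.1 _ hab
  have hb := b.isLt
  let S := Finset.univ.filter fun c => a < c ∧ c < b ∧ IsEdge n T a c
  simp only [IsDiag, Fin.lt_def] at hdiag
  have hS : S.Nonempty := by
    refine ⟨⟨a + 1, by omega⟩,
      Finset.mem_filter.2 ⟨Finset.mem_univ _, ?_, ?_, Or.inl ⟨?_, Or.inl rfl⟩⟩⟩ <;>
      simp only [Fin.lt_def] <;> omega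
  obtain ⟨c, hcS, hcmax⟩ := S.exists_max_image id hS
  simp only [S, Finset.mem_filter, Finset.mem_univ, true_and, id] at hcS hcmax
  obtain ⟨hac, hcb, hedge⟩ := hcS
  refine ⟨c, hac, hcb, hedge, ?_⟩
  by_contra hcb'
  have hcb_diag : IsDiag n (c, b) := ⟨hcb, fun h => hcb' (Or.inl ⟨hcb, h⟩)⟩
  obtain ⟨⟨p, q⟩, hf, hcross⟩ := hT.2.2 _ hcb_diag fun h => hcb' (Or.inr h)
  have hcases : Cross n (p, q) (a, b) ∨ Cross n (p, q) (a, c) ∨ (p = a ∧ c < q ∧ q < b) := by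
    simp only [Cross, Fin.lt_def, Fin.ext_iff] at hcross hac ⊢
    omega
  rcases hcases with h | h | ⟨rfl, hcq, hqb⟩
  · exact hT.not_cross hf hab h
  · exact hT.not_cross_of_isEdge hedge hf h
  · exact (hcmax q ⟨hac.trans hcq, hqb, Or.inr hf⟩).not_gt hcq

theorem mem_of_consecutive_isEdge_zero (h0a : IsEdge n T 0 a) (h0b : IsEdge n T 0 b)
    (hab : (a : ℕ) + 1 < b) (hgap : ∀ c, a < c → c < b → (0, c) ∉ T) : (a, b) ∈ T := by
  have ha := hT.lt_of_isEdge h0a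
  by_contra hab'
  have hdiag : IsDiag n (a, b) := by
    simp only [IsDiag, Fin.lt_def, Fin.val_zero] at *
    omega
  obtain ⟨⟨p, q⟩, hf, hcross⟩ := hT.2.2 _ hdiag hab'
  have hcases : Cross n (p, q) (0, b) ∨ Cross n (p, q) (0, a) ∨ (p = 0 ∧ a < q ∧ q < b) := by
    simp only [Cross, Fin.lt_def, Fin.ext_iff, Fin.val_zero] at *
    omega
  rcases hcases with h | h | ⟨rfl, haq, hqb⟩
  · exact hT.not_cross_of_isEdge h0b hf h
  · exact hT.not_cross_of_isEdge h0a hf h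
  · exact hgap q haq hqb hf

theorem eq_fan_of_fan_subset (h : fan n ⊆ T) : T = fan n := by
  refine Finset.Subset.antisymm (fun e he => mem_fan.2 ⟨hT.1 e he, ?_⟩) h
  by_contra he0
  obtain ⟨hlt, hside⟩ := hT.1 e he
  have he2 := e.2.isLt
  let s : Fin (n + 2) × Fin (n + 2) := (0, ⟨e.1 + 1, by simp only [Fin.lt_def] at hlt; omega⟩)
  have hs : s ∈ T := by
    refine h (mem_fan.2 ⟨?_, rfl⟩)
    simp only [IsDiag, s, Fin.lt_def, Fin.val_zero, Fin.ext_iff] at *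
    omega
  refine hT.not_cross hs he ?_
  simp only [Cross, s, Fin.lt_def, Fin.val_zero, Fin.ext_iff] at *
  omega

theorem exists_consecutive_isEdge_zero {z : Fin (n + 2)} (hz : IsDiag n (0, z))
    (hzT : (0, z) ∉ T) :
    ∃ x y, IsEdge n T 0 x ∧ IsEdge n T 0 y ∧ (x, y) ∈ T ∧ ∀ c, x < c → c < y → (0, c) ∉ T := by
  classical
  have hz' : 1 < (z : ℕ) ∧ (z : ℕ) < n + 1 := by
    have := z.isLt
    simp only [IsDiag, Fin.lt_def, Fin.val_zero, true_and] at hz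
    omega
  let L := Finset.univ.filter fun k => k < z ∧ IsEdge n T 0 k
  let R := Finset.univ.filter fun k => z < k ∧ IsEdge n T 0 k
  have hL : L.Nonempty := by
    refine ⟨⟨1, by omega⟩,
      Finset.mem_filter.2 ⟨Finset.mem_univ _, ?_, Or.inl ⟨?_, Or.inl rfl⟩⟩⟩ <;>
      simp only [Fin.lt_def, Fin.val_zero] <;> omega
  have hR : R.Nonempty := by
    refine ⟨Fin.last (n + 1),
      Finset.mem_filter.2 ⟨Finset.mem_univ _, ?_, Or.inl ⟨?_, Or.inr ⟨rfl, rfl⟩⟩⟩⟩ <;>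
      simp only [Fin.lt_def, Fin.val_zero, Fin.val_last] <;> omega
  obtain ⟨x, hxL, hxmax⟩ := L.exists_max_image id hL
  obtain ⟨y, hyR, hymin⟩ := R.exists_min_image id hR
  simp only [L, R, Finset.mem_filter, Finset.mem_univ, true_and, id] at hxL hxmax hyR hymin
  have hgap : ∀ c, x < c → c < y → (0, c) ∉ T := by
    intro c hxc hcy hc
    rcases lt_trichotomy c z with h | rfl | h
    · exact (hxmax c ⟨h, Or.inr hc⟩).not_gt hxc
    · exact hzT hc
    · exact (hymin c ⟨h, Or.inr hc⟩).not_gt hcy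
  have hxy : (x : ℕ) + 1 < y := by
    have := hxL.1
    have := hyR.1
    simp only [Fin.lt_def] at *
    omega
  exact ⟨x, y, hxL.2, hyR.2, hT.mem_of_consecutive_isEdge_zero hxL.2 hyR.2 hxy hgap, hgap⟩

theorem exists_flip_sdiff_fan_ssubset (he : e ∈ fan n) (heT : e ∉ T) :
    ∃ T', Flip n T T' ∧ fan n \ T' ⊂ fan n \ T := by
  obtain ⟨hdiag, he0⟩ := mem_fan.1 he
  obtain ⟨e₀, z⟩ := e
  obtain rfl : e₀ = 0 := he0
  obtain ⟨x, y, h0x, h0y, hxy, hgap⟩ := hT.exists_consecutive_isEdge_zero hdiag heT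
  obtain ⟨c, hxc, hcy, hxc', hcy'⟩ := hT.exists_apex hxy
  have hx := hT.lt_of_isEdge h0x
  refine ⟨_, hT.flip_of_quadrilateral hx hxc hcy hxy h0x hxc' hcy' h0y,
    (Finset.ssubset_iff_of_subset fun g hg => ?_).2 ⟨(0, c), ?_, ?_⟩⟩
  · simp only [Finset.mem_sdiff, Finset.mem_insert, Finset.mem_erase, not_or, not_and_or,
      not_not] at hg ⊢
    refine ⟨hg.1, fun hgT => ?_⟩
    rcases hg.2.2 with h | h
    · exact hx.ne ((mem_fan.1 hg.1).2.symm.trans (congrArg Prod.fst h))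
    · exact h hgT
  · exact Finset.mem_sdiff.2
      ⟨mem_fan.2 ⟨IsDiag.of_lt_of_lt_of_lt hx hxc hcy, rfl⟩, hgap c hxc hcy⟩
  · exact fun h => (Finset.mem_sdiff.1 h).2 (Finset.mem_insert_self _ _)

end IsTriangulation

lemma card_fan_le : (fan n).card ≤ n - 1 := by
  calc (fan n).card ≤ (Finset.Icc 2 n).card := by
        refine Finset.card_le_card_of_injOn (fun e => (e.2 : ℕ)) (fun e he => ?_)
          fun e he f hf hef => ?_
        · obtain ⟨⟨hlt, hside⟩, he0⟩ := mem_fan.1 he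
          have := e.2.isLt
          simp only [Finset.coe_Icc, Set.mem_Icc, Fin.lt_def, he0, Fin.val_zero, true_and] at *
          omega
        · have he0 := (mem_fan.1 he).2
          have hf0 := (mem_fan.1 hf).2
          exact Prod.ext (he0.trans hf0.symm) (Fin.ext hef)
    _ = n - 1 := by simp

lemma Flip.symm {T T' : Finset (Fin (n + 2) × Fin (n + 2))} (h : Flip n T T') : Flip n T' T := by
  obtain ⟨hT, hT', d, hd, d', hd', rfl⟩ := h
  refine ⟨hT', hT, d', Finset.mem_insert_self _ _, d, fun h => ?_, ?_⟩
  · rcases Finset.mem_insert.1 h with h | h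
    · exact hd' (h ▸ hd)
    · exact (Finset.mem_erase.1 h).1 rfl
  · rw [Finset.erase_insert fun h => hd' (Finset.mem_of_mem_erase h), Finset.insert_erase hd]

lemma Flip.irrefl : ¬ Flip n T T := by
  rintro ⟨-, -, d, -, d', hd', hT⟩
  exact hd' (by rw [hT]; exact Finset.mem_insert_self _ _)

def flipGraph (n : ℕ) : SimpleGraph (Finset (Fin (n + 2) × Fin (n + 2))) where
  Adj := Flip n
  symm := ⟨fun _ _ => Flip.symm⟩
  loopless := ⟨fun _ => Flip.irrefl⟩

theorem IsTriangulation.exists_walk_to_fan (hT : IsTriangulation n T) :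
    ∃ p : (flipGraph n).Walk T (fan n), p.length ≤ (fan n \ T).card := by
  induction hk : (fan n \ T).card using Nat.strong_induction_on generalizing T with
  | _ k ih =>
    by_cases hsub : fan n ⊆ T
    · rw [hT.eq_fan_of_fan_subset hsub]
      exact ⟨.nil, Nat.zero_le _⟩
    · obtain ⟨e, he, heT⟩ := Finset.not_subset.1 hsub
      obtain ⟨T', hflip, hlt⟩ := hT.exists_flip_sdiff_fan_ssubset he heT
      have hcard := Finset.card_lt_card hlt
      obtain ⟨p, hp⟩ := ih _ (hk ▸ hcard) hflip.2.1 rfl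
      have hadj : (flipGraph n).Adj T T' := hflip
      exact ⟨.cons hadj p, by rw [SimpleGraph.Walk.length_cons]; omega⟩

theorem SimpleGraph.Walk.exists_isChain_cons {V : Type*} {G : SimpleGraph V} {u v : V}
    (p : G.Walk u v) :
    ∃ l : List V, l.length = p.length ∧ List.IsChain G.Adj (u :: l) ∧
      (u :: l).getLast (List.cons_ne_nil u l) = v :=
  ⟨p.support.tail, by simp, by rw [p.cons_tail_support]; exact p.isChain_adj_support,
    (List.getLast_congr _ _ p.cons_tail_support).trans p.getLast_support⟩

end

/-- For `n ≥ 2`, any two triangulations of a convex polygon with `n+2` vertices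
can be transformed into each other by a sequence of at most `2n - 2` diagonal flips. -/
theorem triangulations_flip_distance (n : ℕ)
    (T₁ T₂ : Finset (Fin (n + 2) × Fin (n + 2)))
    (h₁ : IsTriangulation n T₁) (h₂ : IsTriangulation n T₂) :
    ∃ l : List (Finset (Fin (n + 2) × Fin (n + 2))),
      l.length ≤ 2 * n - 2 ∧ List.Chain (Flip n) T₁ l ∧
        (T₁ :: l).getLast (by simp) = T₂ := by
  obtain ⟨p₁, hp₁⟩ := h₁.exists_walk_to_fan
  obtain ⟨p₂, hp₂⟩ := h₂.exists_walk_to_fan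
  obtain ⟨l, hlen, hchain, hlast⟩ := (p₁.append p₂.reverse).exists_isChain_cons
  refine ⟨l, ?_, hchain, hlast⟩
  have hfan := card_fan_le (n := n)
  have hT₁ := Finset.card_le_card (Finset.sdiff_subset (s := fan n) (t := T₁))
  have hT₂ := Finset.card_le_card (Finset.sdiff_subset (s := fan n) (t := T₂))
  rw [SimpleGraph.Walk.length_append, SimpleGraph.Walk.length_reverse] at hlen
  omega
end
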